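/- Let (M,h) be a 3-dimensional Riemannian manifold with orthonormal triad {m, ḿ, m̂}. Then the diagonal crossed shear components satisfy Σ(ḿ,ḿ) = −ά(m) − (1/2)κ = −Σ(m̂,m̂), where ά(m) = m^a (ḿ^c ∇_c ḿ_a) is the m-component of the acceleration of ḿ and κ = P^{cd}κ_{cd} is the expansion scalar of m. -/
import Mathlib


/-!
Pointwise formalization of the kinematic quantities of a unit vector field on a
3-dimensional Riemannian manifold.  At a fixed point, the metric is given by its
covariant components `h`, with inverse `hinv`; (co)vectors are given by their
covariant components, and `Du a b` denotes the components `∇_a u_b` of the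
covariant derivative (w.r.t. the Levi-Civita connection) of the unit covector
field `u`.  Metric compatibility of the Levi-Civita connection together with the
constancy of the scalar products of the triad is encoded through the
hypothesis that `dDot` (the covariant derivative of the scalar product of two of
the triad fields) vanishes.
-/

namespace Stmt2

noncomputable section

abbrev Idx := Fin 3
abbrev Vec := Idx → ℝ
abbrev Ten2 := Idx → Idx → ℝ

/-- Raise an index with the inverse metric: `u^a = h^{ab} u_b`. -/
def raise (hinv : Ten2) (u : Vec) : Vec := fun a => ∑ b, hinv a b * u b

/-- Scalar product of two covectors: `h^{ab} u_a v_b`. -/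
def dotInv (hinv : Ten2) (u v : Vec) : ℝ := ∑ a, ∑ b, hinv a b * u a * v b

/-- Projector orthogonal to the unit covector `u`: `P_{ab} = h_{ab} - u_a u_b`. -/
def proj (h : Ten2) (u : Vec) : Ten2 := fun a b => h a b - u a * u b

/-- Mixed projector `P^c_a = h^{ce} P_{ea}`. -/
def projMix (h hinv : Ten2) (u : Vec) : Ten2 := fun c a => ∑ e, hinv c e * proj h u e a

/-- Expansion tensor `κ_{ab} = P^c_a P^d_b ∇_{(c} u_{d)}`. -/
def expansion (h hinv : Ten2) (u : Vec) (Du : Ten2) : Ten2 := fun a b =>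
  ∑ c, ∑ d, projMix h hinv u c a * projMix h hinv u d b * ((Du c d + Du d c) / 2)

/-- Vorticity tensor `ω_{ab} = P^c_a P^d_b ∇_{[c} u_{d]}`. -/
def vorticity (h hinv : Ten2) (u : Vec) (Du : Ten2) : Ten2 := fun a b =>
  ∑ c, ∑ d, projMix h hinv u c a * projMix h hinv u d b * ((Du c d - Du d c) / 2)

/-- Expansion scalar `κ = P^{cd} κ_{cd}`. -/
def expScalar (h hinv : Ten2) (u : Vec) (Du : Ten2) : ℝ :=
  ∑ a, ∑ b, ∑ c, ∑ d, hinv a c * hinv b d * proj h u c d * expansion h hinv u Du a b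

/-- Shear tensor `Σ_{ab} = κ_{ab} - (1/2) P_{ab} κ`. -/
def shear (h hinv : Ten2) (u : Vec) (Du : Ten2) : Ten2 := fun a b =>
  expansion h hinv u Du a b - (1/2) * proj h u a b * expScalar h hinv u Du

/-- Contraction `T(v,w) = v^a w^b T_{ab}` of a covariant 2-tensor with two
raised covectors. -/
def contr2 (hinv : Ten2) (T : Ten2) (v w : Vec) : ℝ :=
  ∑ a, ∑ b, raise hinv v a * raise hinv w b * T a b

/-- Covariant derivative of the scalar product `h^{bc} u_b v_c` of two covector
fields: by metric compatibility of the Levi-Civita connection this is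
`h^{bc} (∇_a u_b v_c + u_b ∇_a v_c)`. -/
def dDot (hinv : Ten2) (u v : Vec) (Du Dv : Ten2) (a : Idx) : ℝ :=
  ∑ b, ∑ c, hinv b c * (Du a b * v c + u b * Dv a c)

/-- Acceleration one-form `a_b = u^c ∇_c u_b` of the unit covector field `u`. -/
def accel (hinv : Ten2) (u : Vec) (Du : Ten2) : Vec := fun b =>
  ∑ c, raise hinv u c * Du c b

lemma dotInv_symm (hinv : Ten2) (hinvsym : ∀ a b, hinv a b = hinv b a) (u v : Vec) :
    dotInv hinv u v = dotInv hinv v u := by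
  simp only [dotInv, Fin.sum_univ_three]
  linear_combination (u 1 * v 0 - u 0 * v 1) * hinvsym 1 0
    + (u 2 * v 0 - u 0 * v 2) * hinvsym 2 0 + (u 2 * v 1 - u 1 * v 2) * hinvsym 2 1

lemma raise_dot (hinv : Ten2) (hinvsym : ∀ a b, hinv a b = hinv b a) (v w : Vec) :
    (∑ a, raise hinv v a * w a) = dotInv hinv v w := by
  simp only [raise, dotInv, Fin.sum_univ_three]
  linear_combination (v 0 * w 1 - v 1 * w 0) * hinvsym 1 0
    + (v 0 * w 2 - v 2 * w 0) * hinvsym 2 0 + (v 1 * w 2 - v 2 * w 1) * hinvsym 2 1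

lemma raiseLower (h hinv : Ten2)
    (hinverse : ∀ a b, (∑ c, h a c * hinv c b) = if a = b then 1 else 0)
    (v : Vec) (e : Idx) : (∑ a, h e a * raise hinv v a) = v e := by
  have key : (∑ a, h e a * raise hinv v a) = ∑ b, (∑ a, h e a * hinv a b) * v b := by
    simp only [raise, Fin.sum_univ_three]; ring
  rw [key]
  simp only [hinverse e]
  simp [Fin.sum_univ_three]

lemma projMix_contract (h hinv : Ten2)
    (hinverse : ∀ a b, (∑ c, h a c * hinv c b) = if a = b then 1 else 0)
    (m y : Vec) (hy : (∑ a, raise hinv y a * m a) = 0) (c : Idx) :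
    (∑ a, raise hinv y a * projMix h hinv m c a) = raise hinv y c := by
  have key : (∑ a, raise hinv y a * projMix h hinv m c a)
      = ∑ e, hinv c e * ((∑ a, h e a * raise hinv y a) - m e * (∑ a, raise hinv y a * m a)) := by
    simp only [projMix, proj, Fin.sum_univ_three]; ring
  rw [key]
  simp only [raiseLower h hinv hinverse y, hy, mul_zero, sub_zero]
  simp [raise]

lemma factor4 (x : Vec) (P S : Ten2) :
    (∑ a, ∑ b, x a * x b * (∑ c, ∑ d, P c a * P d b * S c d))
      = ∑ c, ∑ d, (∑ a, x a * P c a) * (∑ b, x b * P d b) * S c d := by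
  simp only [Fin.sum_univ_three]; ring

lemma contr2_expansion (h hinv : Ten2)
    (hinverse : ∀ a b, (∑ c, h a c * hinv c b) = if a = b then 1 else 0)
    (m y : Vec) (Dm : Ten2) (hy : (∑ a, raise hinv y a * m a) = 0) :
    contr2 hinv (expansion h hinv m Dm) y y
      = ∑ c, ∑ d, raise hinv y c * raise hinv y d * Dm c d := by
  simp only [contr2, expansion]
  rw [factor4 (raise hinv y) (projMix h hinv m) (fun c d => (Dm c d + Dm d c) / 2)]
  simp only [projMix_contract h hinv hinverse m y hy]
  simp only [Fin.sum_univ_three]; ring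

lemma transfer (hinv : Ten2) (hinvsym : ∀ a b, hinv a b = hinv b a)
    (m m' : Vec) (Dm Dm' : Ten2)
    (c12 : ∀ a, dDot hinv m m' Dm Dm' a = 0) (a : Idx) :
    (∑ b, raise hinv m' b * Dm a b) = - ∑ b, raise hinv m b * Dm' a b := by
  have key := c12 a
  simp only [dDot, raise, Fin.sum_univ_three] at key ⊢
  simp only [hinvsym 1 0, hinvsym 2 0, hinvsym 2 1] at key ⊢
  linear_combination key

lemma completeness (h hinv : Ten2)
    (hinvsym : ∀ a b, hinv a b = hinv b a)
    (hinverse : ∀ a b, (∑ c, h a c * hinv c b) = if a = b then 1 else 0)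
    (m m' m'' : Vec)
    (hu1 : dotInv hinv m m = 1) (hu2 : dotInv hinv m' m' = 1) (hu3 : dotInv hinv m'' m'' = 1)
    (ho12 : dotInv hinv m m' = 0) (ho13 : dotInv hinv m m'' = 0) (ho23 : dotInv hinv m' m'' = 0) :
    ∀ a b, h a b = m a * m b + m' a * m' b + m'' a * m'' b := by
  have dsym : ∀ u v : Vec, dotInv hinv u v = dotInv hinv v u := by
    intro u v
    simp only [dotInv, Fin.sum_univ_three]
    linear_combination (u 1 * v 0 - u 0 * v 1) * hinvsym 1 0
      + (u 2 * v 0 - u 0 * v 2) * hinvsym 2 0 + (u 2 * v 1 - u 1 * v 2) * hinvsym 2 1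
  set V : Matrix Idx Idx ℝ := Matrix.of (fun a i => ![m, m', m''] i a) with hV
  set A : Matrix Idx Idx ℝ := Matrix.of hinv with hA
  set H : Matrix Idx Idx ℝ := Matrix.of h with hH
  have hHA : H * A = 1 := by
    ext a b
    simpa [Matrix.mul_apply, Matrix.one_apply, hA, hH] using hinverse a b
  have orth : ∀ i j : Idx, dotInv hinv (![m, m', m''] i) (![m, m', m''] j)
      = if i = j then 1 else 0 := by
    intro i j
    fin_cases i <;> fin_cases j <;>
      simp [hu1, hu2, hu3, ho12, ho13, ho23, dsym m' m, dsym m'' m, dsym m'' m']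
  have hVAV : V.transpose * (A * V) = 1 := by
    ext i j
    have entry : (V.transpose * (A * V)) i j = dotInv hinv (![m, m', m''] i) (![m, m', m''] j) := by
      simp only [Matrix.mul_apply, Matrix.transpose_apply, hV, hA, Matrix.of_apply, dotInv,
        Fin.sum_univ_three]
      ring
    rw [entry, orth i j, Matrix.one_apply]
  have hAVVt : (A * V) * V.transpose = 1 := mul_eq_one_comm.mp hVAV
  have hAVV : A * (V * V.transpose) = 1 := by rw [← Matrix.mul_assoc]; exact hAVVt
  have hHVV : H = V * V.transpose := by
    calc H = H * (A * (V * V.transpose)) := by rw [hAVV, Matrix.mul_one]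
    _ = (H * A) * (V * V.transpose) := by rw [Matrix.mul_assoc]
    _ = V * V.transpose := by rw [hHA, Matrix.one_mul]
  intro a b
  have := congrFun (congrFun hHVV a) b
  simpa [Matrix.mul_apply, Matrix.transpose_apply, hH, hV, Fin.sum_univ_three] using this

/-- For an orthonormal triad `{m, ḿ, m̂}` on a 3-dimensional
Riemannian manifold, the diagonal crossed shear components satisfy
`Σ(ḿ,ḿ) = −ά(m) − (1/2)κ = −Σ(m̂,m̂)`, where `ά(m)` is the `m`-component of the
acceleration of `ḿ` and `κ` is the expansion scalar of `m`. -/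
theorem diagonal_crossed_shear_identity
    (h hinv : Ten2)
    (hsym : ∀ a b, h a b = h b a)
    (hinvsym : ∀ a b, hinv a b = hinv b a)
    (hinverse : ∀ a b, (∑ c, h a c * hinv c b) = if a = b then 1 else 0)
    (m m' m'' : Vec)
    (hu1 : dotInv hinv m m = 1) (hu2 : dotInv hinv m' m' = 1) (hu3 : dotInv hinv m'' m'' = 1)
    (ho12 : dotInv hinv m m' = 0) (ho13 : dotInv hinv m m'' = 0) (ho23 : dotInv hinv m' m'' = 0)
    (Dm Dm' Dm'' : Ten2)
    (c11 : ∀ a, dDot hinv m m Dm Dm a = 0)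
    (c22 : ∀ a, dDot hinv m' m' Dm' Dm' a = 0)
    (c33 : ∀ a, dDot hinv m'' m'' Dm'' Dm'' a = 0)
    (c12 : ∀ a, dDot hinv m m' Dm Dm' a = 0)
    (c13 : ∀ a, dDot hinv m m'' Dm Dm'' a = 0)
    (c23 : ∀ a, dDot hinv m' m'' Dm' Dm'' a = 0) :
    contr2 hinv (shear h hinv m Dm) m' m'
      = - (∑ a, raise hinv m a * accel hinv m' Dm' a)
        - (1/2) * expScalar h hinv m Dm
    ∧ contr2 hinv (shear h hinv m Dm) m' m'
      = - contr2 hinv (shear h hinv m Dm) m'' m'' := by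

  have dsym := dotInv_symm hinv hinvsym
  have hcomp := completeness h hinv hinvsym hinverse m m' m'' hu1 hu2 hu3 ho12 ho13 ho23
  have dv_m : (∑ a, raise hinv m' a * m a) = 0 := by
    rw [raise_dot hinv hinvsym, dsym m' m]; exact ho12
  have dw_m : (∑ a, raise hinv m'' a * m a) = 0 := by
    rw [raise_dot hinv hinvsym, dsym m'' m]; exact ho13
  have dv_v : (∑ a, raise hinv m' a * m' a) = 1 := by
    rw [raise_dot hinv hinvsym]; exact hu2
  have dw_w : (∑ a, raise hinv m'' a * m'' a) = 1 := by
    rw [raise_dot hinv hinvsym]; exact hu3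
  have hproj : ∀ c d, proj h m c d = m' c * m' d + m'' c * m'' d := by
    intro c d
    simp only [proj]
    linear_combination hcomp c d
  have hexp : expScalar h hinv m Dm
      = contr2 hinv (expansion h hinv m Dm) m' m'
        + contr2 hinv (expansion h hinv m Dm) m'' m'' := by
    simp only [expScalar, contr2, raise, hproj, Fin.sum_univ_three]
    ring
  have hshear : ∀ y : Vec, contr2 hinv (shear h hinv m Dm) y y
      = contr2 hinv (expansion h hinv m Dm) y y
        - (1/2) * (∑ a, ∑ b, raise hinv y a * raise hinv y b * proj h m a b)
            * expScalar h hinv m Dm := by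
    intro y
    simp only [contr2, shear, Fin.sum_univ_three]
    ring
  have hpnorm : ∀ y : Vec, (∑ a, raise hinv y a * m a) = 0 →
      (∑ a, raise hinv y a * y a) = 1 →
      (∑ a, ∑ b, raise hinv y a * raise hinv y b * proj h m a b) = 1 := by
    intro y hy0 hy1
    have key : (∑ a, ∑ b, raise hinv y a * raise hinv y b * proj h m a b)
        = ∑ a, raise hinv y a * ((∑ b, h a b * raise hinv y b)
            - m a * (∑ b, raise hinv y b * m b)) := by
      simp only [proj, Fin.sum_univ_three]; ring
    rw [key]
    simp only [raiseLower h hinv hinverse y, hy0, mul_zero, sub_zero]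
    exact hy1
  have hA1 : contr2 hinv (expansion h hinv m Dm) m' m'
      = - (∑ a, raise hinv m a * accel hinv m' Dm' a) := by
    rw [contr2_expansion h hinv hinverse m m' Dm dv_m]
    have t0 := transfer hinv hinvsym m m' Dm Dm' c12 0
    have t1 := transfer hinv hinvsym m m' Dm Dm' c12 1
    have t2 := transfer hinv hinvsym m m' Dm Dm' c12 2
    simp only [Fin.sum_univ_three] at t0 t1 t2
    simp only [accel, Fin.sum_univ_three]
    linear_combination raise hinv m' 0 * t0 + raise hinv m' 1 * t1 + raise hinv m' 2 * t2
  have hA2 : contr2 hinv (expansion h hinv m Dm) m'' m''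
      = - (∑ a, raise hinv m a * accel hinv m'' Dm'' a) := by
    rw [contr2_expansion h hinv hinverse m m'' Dm dw_m]
    have t0 := transfer hinv hinvsym m m'' Dm Dm'' c13 0
    have t1 := transfer hinv hinvsym m m'' Dm Dm'' c13 1
    have t2 := transfer hinv hinvsym m m'' Dm Dm'' c13 2
    simp only [Fin.sum_univ_three] at t0 t1 t2
    simp only [accel, Fin.sum_univ_three]
    linear_combination raise hinv m'' 0 * t0 + raise hinv m'' 1 * t1 + raise hinv m'' 2 * t2
  constructor
  · rw [hshear m', hpnorm m' dv_m dv_v, hexp, hA1, hA2]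
    ring
  · rw [hshear m', hshear m'', hpnorm m' dv_m dv_v, hpnorm m'' dw_m dw_w,
      hexp, hA1, hA2]
    ring

end
end Stmt2
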